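/- arXiv:2001.04053 — 3 statements merged into one kernel-verified Lean document; each statement's English description precedes it below -/
import Mathlib

section
/- For p in (1,∞) and (t₁,t₂) with t₂ < 1/p, the log moment generating function Λ_p(t₁,t₂) := log ∫_ℝ exp(t₁ y + t₂ |y|^p) γ_p(dy) satisfies Λ_p(t₁,t₂) = -(1/p) log(1 - p t₂) + log M_{γ_p}(t₁/(1 - p t₂)^{1/p}), where M_{γ_p}(t) = ∫_ℝ e^{t y} γ_p(dy). -/
/-! The substitution `y = c x` with `c ^ p = 1 - p t₂` absorbs the tilt `exp (t₂ |y| ^ p)` into the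
density: `exp (t₂ |x| ^ p) fp (x) = fp (c x)`, so the tilted integral equals
`c⁻¹ ∫ exp ((t₁ / c) y) fp (y) dy`. Integrability of `exp (t y) fp (y)` comes from Young's
inequality, which bounds the linear term `t y` by half of the decay `|y| ^ p / p`. -/

open Real MeasureTheory

/-- The generalized `p`-th Gaussian density. -/
noncomputable def fp (p : ℝ) (y : ℝ) : ℝ :=
  Real.exp (-|y| ^ p / p) / (2 * p ^ (1/p) * Real.Gamma (1 + 1/p))

lemma integrable_exp_neg_mul_abs_rpow {b p : ℝ} (hb : 0 < b) (hp : 0 < p) :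
    Integrable (fun x : ℝ => exp (-b * |x| ^ p)) := by
  have hIoi : IntegrableOn (fun x : ℝ => exp (-b * |x| ^ p)) (Set.Ioi 0) := by
    refine (integrableOn_congr_fun (fun x hx => ?_) measurableSet_Ioi).mp
      (integrableOn_rpow_mul_exp_neg_mul_rpow (s := 0) (by norm_num) hp hb)
    rw [rpow_zero, one_mul, abs_of_pos hx]
  have hIic : IntegrableOn (fun x : ℝ => exp (-b * |x| ^ p)) (Set.Iic 0) := by
    have hneg : MeasurableEmbedding fun x : ℝ => -x := (Homeomorph.neg ℝ).measurableEmbedding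
    rw [← Measure.map_neg_eq_self (volume : Measure ℝ), hneg.integrableOn_map_iff]
    simp_rw [Function.comp_def, abs_neg, Set.neg_preimage, Set.neg_Iic, neg_zero]
    exact (integrableOn_Ici_iff_integrableOn_Ioi).mpr hIoi
  rw [← integrableOn_univ, ← Set.Iic_union_Ioi (a := (0 : ℝ))]
  exact hIic.union hIoi

lemma exp_mul_sub_abs_rpow_div_le {p : ℝ} (hp : 1 < p) (t x : ℝ) :
    exp (t * x - |x| ^ p / p)
      ≤ exp ((2 * |t|) ^ p.conjExponent / (2 * p.conjExponent)) * exp (-(1 / (2 * p)) * |x| ^ p) := by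
  set q := p.conjExponent
  have hyoung : 2 * |t| * |x| ≤ (2 * |t|) ^ q / q + |x| ^ p / p :=
    young_inequality_of_nonneg (by positivity) (abs_nonneg x)
      (HolderConjugate.conjExponent hp).symm
  have hlin : t * x ≤ |t| * |x| := (le_abs_self _).trans (abs_mul t x).le
  rw [← exp_add, exp_le_exp]
  have hconst : (2 * |t|) ^ q / (2 * q) = (2 * |t|) ^ q / q / 2 := by rw [div_div, mul_comm q 2]
  have hdecay : -(1 / (2 * p)) * |x| ^ p = -(|x| ^ p / p / 2) := by
    rw [div_div, mul_comm p 2, one_div, neg_mul, inv_mul_eq_div]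
  rw [hconst, hdecay]
  linarith

lemma integrable_exp_mul_sub_abs_rpow_div {p : ℝ} (hp : 1 < p) (t : ℝ) :
    Integrable (fun x : ℝ => exp (t * x - |x| ^ p / p)) := by
  refine ((integrable_exp_neg_mul_abs_rpow (b := 1 / (2 * p)) (by positivity)
    (by linarith)).const_mul (exp ((2 * |t|) ^ p.conjExponent / (2 * p.conjExponent)))).mono' ?_
    (Filter.Eventually.of_forall fun x => ?_)
  · exact ((measurable_id.const_mul t).sub
      ((measurable_id.abs.pow_const p).div_const p)).exp.aestronglyMeasurable
  · rw [norm_of_nonneg (exp_nonneg _)]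
    exact exp_mul_sub_abs_rpow_div_le hp t x

lemma exp_mul_mul_fp (p t y : ℝ) :
    exp (t * y) * fp p y = exp (t * y - |y| ^ p / p) / (2 * p ^ (1/p) * Gamma (1 + 1/p)) := by
  rw [fp, ← mul_div_assoc, ← exp_add, sub_eq_add_neg, neg_div]

lemma integrable_exp_mul_mul_fp {p : ℝ} (hp : 1 < p) (t : ℝ) :
    Integrable (fun y : ℝ => exp (t * y) * fp p y) := by
  simpa only [exp_mul_mul_fp] using (integrable_exp_mul_sub_abs_rpow_div hp t).div_const _

lemma fp_pos {p : ℝ} (hp : 0 < p) (y : ℝ) : 0 < fp p y := by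
  have : 0 < Gamma (1 + 1/p) := Gamma_pos_of_pos (by positivity)
  unfold fp
  positivity

lemma integral_exp_mul_mul_fp_pos {p : ℝ} (hp : 1 < p) (t : ℝ) :
    0 < ∫ y : ℝ, exp (t * y) * fp p y := by
  have hpos : ∀ y, 0 < exp (t * y) * fp p y := fun y =>
    mul_pos (exp_pos _) (fp_pos (by linarith) y)
  have hsupp : Function.support (fun y => exp (t * y) * fp p y) = Set.univ :=
    Set.eq_univ_of_forall fun y => (hpos y).ne'
  rw [integral_pos_iff_support_of_nonneg (fun y => (hpos y).le) (integrable_exp_mul_mul_fp hp t),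
    hsupp]
  simp

lemma fp_mul_left {c : ℝ} (hc : 0 ≤ c) (p y : ℝ) :
    fp p (c * y) = exp ((1 - c ^ p) / p * |y| ^ p) * fp p y := by
  rw [fp, fp, ← mul_div_assoc, ← exp_add, abs_mul, abs_of_nonneg hc,
    mul_rpow hc (abs_nonneg y)]
  ring_nf

lemma integral_exp_mul_mul_fp_comp_mul_left (p t : ℝ) {c : ℝ} (hc : 0 < c) :
    ∫ y : ℝ, exp (t * y) * fp p (c * y) = c⁻¹ * ∫ y : ℝ, exp (t / c * y) * fp p y := by
  have h := Measure.integral_comp_mul_left (fun x : ℝ => exp (t / c * x) * fp p x) c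
  rw [abs_of_pos (inv_pos.mpr hc), smul_eq_mul] at h
  rw [← h]
  congr with y
  field_simp

lemma integral_exp_tilt_mul_fp {p : ℝ} (hp : 0 < p) (t₁ : ℝ) {t₂ : ℝ} (ht : 0 < 1 - p * t₂) :
    ∫ y : ℝ, exp (t₁ * y + t₂ * |y| ^ p) * fp p y
      = ((1 - p * t₂) ^ (1/p))⁻¹ * ∫ y : ℝ, exp (t₁ / (1 - p * t₂) ^ (1/p) * y) * fp p y := by
  set c := (1 - p * t₂) ^ (1/p)
  have hc : 0 < c := rpow_pos_of_pos ht _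
  have hcp : c ^ p = 1 - p * t₂ := by
    rw [← rpow_mul ht.le, one_div_mul_cancel hp.ne', rpow_one]
  rw [← integral_exp_mul_mul_fp_comp_mul_left p t₁ hc]
  congr with y
  have ht₂ : (1 - c ^ p) / p = t₂ := by
    rw [hcp, sub_sub_cancel, mul_div_cancel_left₀ _ hp.ne']
  rw [fp_mul_left hc.le, ht₂, exp_add, mul_assoc]

theorem stmt2 (p t₁ t₂ : ℝ) (hp : 1 < p) (ht : t₂ < 1/p) :
    Real.log (∫ y : ℝ, Real.exp (t₁ * y + t₂ * |y| ^ p) * fp p y)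
      = -(1/p) * Real.log (1 - p * t₂)
        + Real.log (∫ y : ℝ, Real.exp ((t₁ / (1 - p * t₂) ^ (1/p)) * y) * fp p y) := by
  have hp0 : 0 < p := by linarith
  have hs : 0 < 1 - p * t₂ := by
    have := (lt_div_iff₀' hp0).mp ht
    linarith
  rw [integral_exp_tilt_mul_fp hp0 t₁ hs,
    log_mul (inv_ne_zero (rpow_pos_of_pos hs _).ne') (integral_exp_mul_mul_fp_pos hp _).ne',
    log_inv, log_rpow hs]
  ring
end

section
/- For p in (1,∞), the integral ∫_ℝ exp(t₁ y + t₂ |y|^p) γ_p(dy) is finite if and only if t₂ < 1/p; in particular the effective domain of Λ_p is ℝ × (-∞, 1/p). -/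
/-!
Since `fp p y` is a constant multiple of `exp (-|y| ^ p / p)`, the integrand is a constant multiple
of `exp (t₁ y + c |y| ^ p)` with `c = t₂ - 1/p`. For `c < 0` and `p > 1` the power term beats the
linear one, so the integrand is dominated by a multiple of `exp (-|y|)`. For `c ≥ 0` it dominates
`exp (t₁ y)`, whose even part `2 cosh (t₁ y) ≥ 2` is not integrable on `ℝ`.
-/

open Real MeasureTheory

theorem not_integrable_exp_mul (a : ℝ) : ¬ Integrable (fun y : ℝ => exp (a * y)) := by
  intro h
  have h_even : Integrable (fun y : ℝ => exp (a * y) + exp (a * -y)) := h.add h.comp_neg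
  have h_const : Integrable (fun _ : ℝ => (2 : ℝ)) :=
    h_even.mono' aestronglyMeasurable_const <| ae_of_all _ fun y => by
      have h_cosh := one_le_cosh (a * y)
      rw [cosh_eq] at h_cosh
      rw [norm_two, mul_neg]
      linarith
  rcases integrable_const_iff.mp h_const with h_two | h_fin
  · norm_num at h_two
  · simpa using h_fin.measure_univ_lt_top

theorem integrable_exp_neg_abs : Integrable (fun y : ℝ => exp (-|y|)) := by
  have h_Iic : IntegrableOn (fun y : ℝ => exp (-|y|)) (Set.Iic 0) :=
    (integrableOn_exp_Iic 0).congr_fun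
      (fun y hy => by simp [abs_of_nonpos (Set.mem_Iic.mp hy)]) measurableSet_Iic
  have h_Ioi : IntegrableOn (fun y : ℝ => exp (-|y|)) (Set.Ioi 0) :=
    (exp_neg_integrableOn_Ioi 0 one_pos).congr_fun
      (fun y hy => by simp [abs_of_pos (Set.mem_Ioi.mp hy)]) measurableSet_Ioi
  simpa [Set.Iic_union_Ioi] using h_Iic.union h_Ioi

theorem exists_mul_add_mul_rpow_le {p c : ℝ} (hp : 1 < p) (hc : c < 0) (b : ℝ) :
    ∃ M, ∀ r, 0 ≤ r → b * r + c * r ^ p ≤ M := by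
  -- Beyond `R`, where `-c * r ^ (p - 1) ≥ |b|`, the power term dominates the linear one.
  have hq : 0 ≤ |b| / -c := div_nonneg (abs_nonneg b) (by linarith)
  set R := (|b| / -c) ^ (p - 1)⁻¹
  have hR : 0 ≤ R := rpow_nonneg hq _
  refine ⟨|b| * R, fun r hr => ?_⟩
  have hb : b * r ≤ |b| * r := mul_le_mul_of_nonneg_right (le_abs_self b) hr
  have hrp : 0 ≤ r ^ p := rpow_nonneg hr p
  rcases le_or_gt r R with hrR | hRr
  · nlinarith [mul_le_mul_of_nonneg_left hrR (abs_nonneg b)]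
  · have hRp : R ^ (p - 1) = |b| / -c := by
      rw [← rpow_mul hq, inv_mul_cancel₀ (by linarith), rpow_one]
    have h_pow : |b| ≤ -c * r ^ (p - 1) := by
      rw [← div_le_iff₀' (by linarith), ← hRp]
      exact rpow_le_rpow hR hRr.le (by linarith)
    have h_split : r ^ p = r ^ (p - 1) * r := by
      rw [← rpow_add_one (hR.trans_lt hRr).ne', sub_add_cancel]
    nlinarith [mul_le_mul_of_nonneg_right h_pow hr, mul_nonneg (abs_nonneg b) hR]

theorem integrable_exp_mul_add_mul_abs_rpow {p c : ℝ} (hp : 1 < p) (hc : c < 0) (a : ℝ) :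
    Integrable (fun y : ℝ => exp (a * y + c * |y| ^ p)) := by
  obtain ⟨M, hM⟩ := exists_mul_add_mul_rpow_le hp hc (|a| + 1)
  refine (integrable_exp_neg_abs.const_mul (exp M)).mono' (by fun_prop) (ae_of_all _ fun y => ?_)
  rw [norm_of_nonneg (exp_nonneg _), ← exp_add, exp_le_exp]
  have := hM |y| (abs_nonneg y)
  linarith [le_abs_self (a * y), abs_mul a y]

theorem not_integrable_exp_mul_add_mul_abs_rpow {c : ℝ} (hc : 0 ≤ c) (a p : ℝ) :
    ¬ Integrable (fun y : ℝ => exp (a * y + c * |y| ^ p)) := fun h =>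
  not_integrable_exp_mul a <| h.mono' (by fun_prop) <| ae_of_all _ fun y => by
    rw [norm_of_nonneg (exp_nonneg _), exp_le_exp]
    exact le_add_of_nonneg_right (mul_nonneg hc (rpow_nonneg (abs_nonneg y) p))

theorem integrable_exp_mul_add_mul_abs_rpow_iff {p : ℝ} (hp : 1 < p) (a c : ℝ) :
    Integrable (fun y : ℝ => exp (a * y + c * |y| ^ p)) ↔ c < 0 :=
  ⟨fun h => not_le.mp fun hc => not_integrable_exp_mul_add_mul_abs_rpow hc a p h,
    fun hc => integrable_exp_mul_add_mul_abs_rpow hp hc a⟩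

theorem exp_mul_fp (p t₁ t₂ y : ℝ) :
    exp (t₁ * y + t₂ * |y| ^ p) * fp p y
      = (2 * p ^ (1/p) * Gamma (1 + 1/p))⁻¹ * exp (t₁ * y + (t₂ - 1/p) * |y| ^ p) := by
  rw [fp, mul_div_assoc', ← exp_add, div_eq_inv_mul]
  ring_nf

theorem stmt3 (p t₁ t₂ : ℝ) (hp : 1 < p) :
    Integrable (fun y : ℝ => Real.exp (t₁ * y + t₂ * |y| ^ p) * fp p y) ↔ t₂ < 1/p := by
  have hZ : (2 * p ^ (1/p) * Gamma (1 + 1/p))⁻¹ ≠ 0 := by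
    have : 0 < p := by linarith
    positivity
  simp_rw [exp_mul_fp, integrable_const_mul_iff (isUnit_iff_ne_zero.mpr hZ),
    integrable_exp_mul_add_mul_abs_rpow_iff hp, sub_neg]
end

section
/- For p in (1,∞), every derivative d^k/dt^k log M_{γ_p}(t) of the log moment generating function of the generalized p-Gaussian distribution exists and has at most polynomial growth: for each k there exist C < ∞, m ∈ ℕ, and T ∈ ℝ such that |d^k/dt^k log M_{γ_p}(t)| ≤ C(|t|^m + 1) for |t| > T. -/
open Real MeasureTheory

namespace Stmt6Aux

/-- normalized moment-type integrals -/
noncomputable def Mn (p : ℝ) (j : ℕ) (t : ℝ) : ℝ := ∫ y : ℝ, y ^ j * Real.exp (t * y) * fp p y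

/-- polynomial cutoff -/
noncomputable def Ap (p t : ℝ) : ℝ := (p * (t + 2)) ^ (⌈1/(p-1)⌉₊)

variable {p : ℝ} (hp : 1 < p)

section Basic
include hp

lemma hp0 : (0:ℝ) < p := lt_trans one_pos hp

lemma Zpos : 0 < 2 * p ^ (1/p) * Real.Gamma (1 + 1/p) := by
  have h1 : (0:ℝ) < p ^ (1/p) := Real.rpow_pos_of_pos (hp0 hp) _
  have h2 : 0 < Real.Gamma (1 + 1/p) := Real.Gamma_pos_of_pos (by positivity)
  positivity

lemma fp_pos (y : ℝ) : 0 < fp p y := div_pos (Real.exp_pos _) (Zpos hp)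

lemma fp_cont : Continuous (fp p) := by
  have h1 : Continuous fun y : ℝ => |y| ^ p :=
    continuous_abs.rpow_const (fun x => Or.inr (hp0 hp).le)
  exact ((h1.neg.div_const p).rexp).div_const _

lemma Ap_base_ge (ht : 0 ≤ t) : (2:ℝ) ≤ p * (t + 2) := by nlinarith

lemma Ap_ge_one (ht : 0 ≤ t) : (1:ℝ) ≤ Ap p t := by
  have := Ap_base_ge hp ht
  exact one_le_pow₀ (by linarith)

lemma Ap_nonneg (ht : 0 ≤ t) : (0:ℝ) ≤ Ap p t := le_trans zero_le_one (Ap_ge_one hp ht)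

lemma tail_bound {t y : ℝ} (ht : 0 ≤ t) (hy : Ap p t ≤ |y|) :
    (t + 2) * |y| ≤ |y| ^ p / p := by
  set b := p * (t + 2) with hb
  have hb2 : (2:ℝ) ≤ b := Ap_base_ge hp ht
  have hb1 : (1:ℝ) ≤ b := by linarith
  have hn : (1/(p-1) : ℝ) ≤ (⌈1/(p-1)⌉₊ : ℝ) := Nat.le_ceil _
  have h1 : b ^ ((1:ℝ)/(p-1)) ≤ Ap p t := by
    rw [Ap, ← Real.rpow_natCast b]
    exact Real.rpow_le_rpow_of_exponent_le hb1 hn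
  have hy1 : (1:ℝ) ≤ |y| := le_trans (Ap_ge_one hp ht) hy
  have hyp : (0:ℝ) < |y| := by linarith
  have hpm1 : (0:ℝ) < p - 1 := by linarith
  have h3 : b ≤ |y| ^ (p - 1) := by
    have h4 : (b ^ ((1:ℝ)/(p-1))) ^ (p-1) ≤ |y| ^ (p-1) :=
      Real.rpow_le_rpow (Real.rpow_nonneg (by linarith) _) (le_trans h1 hy) hpm1.le
    rwa [← Real.rpow_mul (by linarith : (0:ℝ) ≤ b),
      one_div, inv_mul_cancel₀ hpm1.ne', Real.rpow_one] at h4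
  have h5 : |y| ^ p = |y| ^ (p - 1) * |y| := by
    rw [show p = (p-1)+1 by ring, Real.rpow_add hyp, Real.rpow_one]
    ring_nf
  rw [h5, le_div_iff₀ (hp0 hp)]
  have hby : b * |y| ≤ |y| ^ (p-1) * |y| := mul_le_mul_of_nonneg_right h3 (abs_nonneg y)
  nlinarith [abs_nonneg y]

lemma global_bound {t : ℝ} (ht : 0 ≤ t) (y : ℝ) :
    (t + 2) * |y| ≤ |y| ^ p / p + (t + 2) * Ap p t := by
  rcases le_total |y| (Ap p t) with h | h
  · have h1 : (0:ℝ) ≤ |y| ^ p / p :=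
      div_nonneg (Real.rpow_nonneg (abs_nonneg y) p) (hp0 hp).le
    nlinarith [abs_nonneg y, Ap_nonneg hp ht]
  · have := tail_bound hp ht h
    nlinarith [Ap_nonneg hp ht]

omit hp in
lemma pow_le_fact_exp (j : ℕ) (x : ℝ) (hx : 0 ≤ x) :
    x ^ j ≤ (j.factorial : ℝ) * Real.exp x := by
  have h1 : x ^ j / (j.factorial : ℝ) ≤ Real.exp x := by
    have h2 := Real.sum_le_exp_of_nonneg hx (j + 1)
    refine le_trans ?_ h2
    have : ∀ i ∈ Finset.range (j+1), (0:ℝ) ≤ x ^ i / (i.factorial : ℝ) := by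
      intro i _; positivity
    simpa using Finset.single_le_sum this (Finset.self_mem_range_succ j)
  have hf : (0:ℝ) < (j.factorial : ℝ) := by exact_mod_cast j.factorial_pos
  rw [div_le_iff₀ hf] at h1
  linarith [h1]

lemma expo_bound (j : ℕ) {t : ℝ} (ht : 0 ≤ t) (y : ℝ) :
    |y| ^ j * Real.exp (t * |y|) * Real.exp (-|y| ^ p / p) ≤
      (j.factorial : ℝ) * Real.exp ((t + 2) * Ap p t) * Real.exp (-|y|) := by
  rw [neg_div]
  have h1 : |y| ^ j ≤ (j.factorial : ℝ) * Real.exp |y| := pow_le_fact_exp j _ (abs_nonneg y)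
  calc |y| ^ j * Real.exp (t * |y|) * Real.exp (-(|y| ^ p / p))
      ≤ ((j.factorial : ℝ) * Real.exp |y|) * Real.exp (t * |y|) * Real.exp (-(|y| ^ p / p)) := by
        exact mul_le_mul_of_nonneg_right (mul_le_mul_of_nonneg_right h1 (Real.exp_pos _).le)
          (Real.exp_pos _).le
    _ = (j.factorial : ℝ) * Real.exp (|y| + t * |y| + -(|y| ^ p / p)) := by
        rw [Real.exp_add, Real.exp_add]; ring
    _ ≤ (j.factorial : ℝ) * Real.exp ((t + 2) * Ap p t + -|y|) := by
        have hkey := global_bound hp ht y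
        have h6 : |y| + t * |y| + -(|y| ^ p / p) ≤ (t + 2) * Ap p t + -|y| := by nlinarith
        exact mul_le_mul_of_nonneg_left (Real.exp_le_exp.mpr h6) (Nat.cast_nonneg _)
    _ = (j.factorial : ℝ) * Real.exp ((t + 2) * Ap p t) * Real.exp (-|y|) := by
        rw [Real.exp_add]; ring

end Basic

lemma integrable_exp_neg_abs : Integrable (fun y : ℝ => Real.exp (-|y|)) := by
  have h1 : IntegrableOn (fun y : ℝ => Real.exp (-|y|)) (Set.Ioi 0) := by
    refine ((exp_neg_integrableOn_Ioi 0 one_pos).congr_fun ?_ measurableSet_Ioi)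
    intro y hy
    simp [abs_of_pos (Set.mem_Ioi.mp hy)]
  have h2 : IntegrableOn (fun y : ℝ => Real.exp (-|y|)) (Set.Iic 0) := by
    refine (integrableOn_exp_Iic 0).congr_fun ?_ measurableSet_Iic
    intro y hy
    simp [abs_of_nonpos (Set.mem_Iic.mp hy)]
  have := h2.union h1
  rwa [Set.Iic_union_Ioi, integrableOn_univ] at this

section Main
include hp

lemma cont_integrand (j : ℕ) (t : ℝ) :
    Continuous fun y : ℝ => y ^ j * Real.exp (t * y) * fp p y :=
  (((continuous_pow j).mul ((continuous_const.mul continuous_id).rexp)).mul (fp_cont hp))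

lemma cont_kernel (j : ℕ) (c : ℝ) :
    Continuous fun y : ℝ => |y| ^ j * Real.exp (c * |y|) * fp p y :=
  (((continuous_abs.pow j).mul ((continuous_const.mul continuous_abs).rexp)).mul (fp_cont hp))

lemma kernel_le (j : ℕ) {c : ℝ} (hc : 0 ≤ c) (y : ℝ) :
    |y| ^ j * Real.exp (c * |y|) * fp p y ≤
      ((j.factorial : ℝ) * Real.exp ((c + 2) * Ap p c) / (2 * p ^ (1/p) * Real.Gamma (1 + 1/p)))
        * Real.exp (-|y|) := by
  have hZ := Zpos hp
  have h := expo_bound hp j hc y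
  have hfp : fp p y = Real.exp (-|y| ^ p / p) / (2 * p ^ (1/p) * Real.Gamma (1 + 1/p)) := rfl
  rw [hfp]
  set Z := 2 * p ^ (1/p) * Real.Gamma (1 + 1/p)
  calc |y| ^ j * Real.exp (c * |y|) * (Real.exp (-|y| ^ p / p) / Z)
      = (|y| ^ j * Real.exp (c * |y|) * Real.exp (-|y| ^ p / p)) * Z⁻¹ := by ring
    _ ≤ ((j.factorial : ℝ) * Real.exp ((c + 2) * Ap p c) * Real.exp (-|y|)) * Z⁻¹ :=
        mul_le_mul_of_nonneg_right h (inv_nonneg.mpr hZ.le)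
    _ = ((j.factorial : ℝ) * Real.exp ((c + 2) * Ap p c) / Z) * Real.exp (-|y|) := by ring

lemma integrable_kernel (j : ℕ) (c : ℝ) :
    Integrable (fun y : ℝ => |y| ^ j * Real.exp (c * |y|) * fp p y) := by
  refine Integrable.mono' (integrable_exp_neg_abs.const_mul
      ((j.factorial : ℝ) * Real.exp ((|c| + 2) * Ap p |c|) /
        (2 * p ^ (1/p) * Real.Gamma (1 + 1/p)))) (cont_kernel hp j c).aestronglyMeasurable ?_
  filter_upwards with y
  have h0 : (0:ℝ) ≤ |y| ^ j * Real.exp (c * |y|) * fp p y := by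
    have := fp_pos hp y
    positivity
  rw [Real.norm_eq_abs, abs_of_nonneg h0]
  have h1 : |y| ^ j * Real.exp (c * |y|) * fp p y ≤ |y| ^ j * Real.exp (|c| * |y|) * fp p y := by
    have hexp : Real.exp (c * |y|) ≤ Real.exp (|c| * |y|) :=
      Real.exp_le_exp.mpr (mul_le_mul_of_nonneg_right (le_abs_self c) (abs_nonneg y))
    exact mul_le_mul_of_nonneg_right
      (mul_le_mul_of_nonneg_left hexp (pow_nonneg (abs_nonneg y) j)) (fp_pos hp y).le
  exact le_trans h1 (kernel_le hp j (abs_nonneg c) y)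

lemma integrable_Mn (j : ℕ) (t : ℝ) :
    Integrable (fun y : ℝ => y ^ j * Real.exp (t * y) * fp p y) := by
  refine Integrable.mono' (integrable_kernel hp j |t|) (cont_integrand hp j t).aestronglyMeasurable ?_
  filter_upwards with y
  rw [Real.norm_eq_abs, abs_mul, abs_mul, abs_pow, abs_of_nonneg (fp_pos hp y).le,
    Real.abs_exp]
  have hexp : Real.exp (t * y) ≤ Real.exp (|t| * |y|) := by
    refine Real.exp_le_exp.mpr ?_
    calc t * y ≤ |t * y| := le_abs_self _
      _ = |t| * |y| := abs_mul t y
  exact mul_le_mul_of_nonneg_right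
    (mul_le_mul_of_nonneg_left hexp (pow_nonneg (abs_nonneg y) j)) (fp_pos hp y).le

lemma fp_integrable : Integrable (fp p) := by
  have := integrable_Mn hp 0 0
  simpa using this

lemma setIntegral_fp_pos {s : Set ℝ} (hs : MeasurableSet s) (hvol : 0 < volume s) :
    0 < ∫ y in s, fp p y := by
  rw [setIntegral_pos_iff_support_of_nonneg_ae
    (Filter.Eventually.of_forall fun y => (fp_pos hp y).le) (fp_integrable hp).integrableOn]
  have hsupp : Function.support (fp p) = Set.univ := by
    ext y; simp [Function.mem_support, (fp_pos hp y).ne']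
  rwa [hsupp, Set.univ_inter]

lemma Mn_zero_lb (t : ℝ) :
    min (∫ y in Set.Ici (0:ℝ), fp p y) (∫ y in Set.Iic (0:ℝ), fp p y) ≤ Mn p 0 t := by
  have hint := integrable_Mn hp 0 t
  have hnn : ∀ y : ℝ, 0 ≤ y ^ 0 * Real.exp (t * y) * fp p y := fun y => by
    have := fp_pos hp y
    have := Real.exp_pos (t * y)
    simp only [pow_zero, one_mul]
    positivity
  have hendpoint : ∀ s : Set ℝ, MeasurableSet s → (∀ y ∈ s, 0 ≤ t * y) →
      (∫ y in s, fp p y) ≤ Mn p 0 t := by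
    intro s hs hts
    have h1 : (∫ y in s, fp p y) ≤ ∫ y in s, y ^ 0 * Real.exp (t * y) * fp p y := by
      refine setIntegral_mono_on (fp_integrable hp).integrableOn hint.integrableOn hs ?_
      intro y hy
      have h2 : (1:ℝ) ≤ Real.exp (t * y) := by
        have := Real.add_one_le_exp (t * y)
        have := hts y hy
        linarith
      have := fp_pos hp y
      simp only [pow_zero, one_mul]
      nlinarith
    exact le_trans h1 (setIntegral_le_integral hint (Filter.Eventually.of_forall hnn))
  rcases le_total 0 t with h | h
  · exact le_trans (min_le_left _ _) (hendpoint _ measurableSet_Ici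
      (fun y hy => mul_nonneg h (Set.mem_Ici.mp hy)))
  · exact le_trans (min_le_right _ _) (hendpoint _ measurableSet_Iic
      (fun y hy => by have := Set.mem_Iic.mp hy; nlinarith))

lemma Mn_zero_pos (t : ℝ) : 0 < Mn p 0 t := by
  refine lt_of_lt_of_le (lt_min ?_ ?_) (Mn_zero_lb hp t)
  · exact setIntegral_fp_pos hp measurableSet_Ici (by rw [Real.volume_Ici]; exact ENNReal.zero_lt_top)
  · exact setIntegral_fp_pos hp measurableSet_Iic (by rw [Real.volume_Iic]; exact ENNReal.zero_lt_top)

lemma hasDerivAt_Mn (j : ℕ) (t : ℝ) : HasDerivAt (Mn p j) (Mn p (j + 1) t) t := by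
  have key := hasDerivAt_integral_of_dominated_loc_of_deriv_le (μ := volume)
    (F := fun x (y : ℝ) => y ^ j * Real.exp (x * y) * fp p y)
    (F' := fun x (y : ℝ) => y ^ (j+1) * Real.exp (x * y) * fp p y)
    (x₀ := t) (s := Metric.ball t 1)
    (bound := fun y => |y| ^ (j+1) * Real.exp ((|t| + 1) * |y|) * fp p y)
    (Metric.ball_mem_nhds t one_pos)
    (Filter.Eventually.of_forall fun x => (cont_integrand hp j x).aestronglyMeasurable)
    (integrable_Mn hp j t)
    ((cont_integrand hp (j+1) t).aestronglyMeasurable)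
    ?_ (integrable_kernel hp (j+1) (|t| + 1)) ?_
  · exact key.2
  · filter_upwards with y
    intro x hx
    have hxt : |x| ≤ |t| + 1 := by
      have := Metric.mem_ball.mp hx
      rw [Real.dist_eq] at this
      have h2 := abs_sub_abs_le_abs_sub x t
      linarith
    rw [Real.norm_eq_abs, abs_mul, abs_mul, abs_pow, abs_of_nonneg (fp_pos hp y).le,
      Real.abs_exp]
    have hexp : Real.exp (x * y) ≤ Real.exp ((|t| + 1) * |y|) := by
      refine Real.exp_le_exp.mpr ?_
      calc x * y ≤ |x * y| := le_abs_self _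
        _ = |x| * |y| := abs_mul x y
        _ ≤ (|t| + 1) * |y| := mul_le_mul_of_nonneg_right hxt (abs_nonneg y)
    exact mul_le_mul_of_nonneg_right
      (mul_le_mul_of_nonneg_left hexp (pow_nonneg (abs_nonneg y) _)) (fp_pos hp y).le
  · filter_upwards with y
    intro x _
    have h1 : HasDerivAt (fun x : ℝ => Real.exp (x * y)) (Real.exp (x * y) * y) x := by
      simpa using ((hasDerivAt_id x).mul_const y).exp
    have h2 := (h1.const_mul ((y:ℝ) ^ j)).mul_const (fp p y)
    exact h2.congr_deriv (by ring)

lemma integrable_abs_Mn (j : ℕ) (t : ℝ) :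
    Integrable (fun y : ℝ => |y| ^ j * Real.exp (t * y) * fp p y) := by
  refine Integrable.mono' (integrable_kernel hp j |t|)
    (((continuous_abs.pow j).mul ((continuous_const.mul continuous_id).rexp)).mul
      (fp_cont hp)).aestronglyMeasurable ?_
  filter_upwards with y
  have h0 : (0:ℝ) ≤ |y| ^ j * Real.exp (t * y) * fp p y := by
    have := fp_pos hp y; positivity
  rw [Real.norm_eq_abs, abs_of_nonneg h0]
  have hexp : Real.exp (t * y) ≤ Real.exp (|t| * |y|) := by
    refine Real.exp_le_exp.mpr ?_
    calc t * y ≤ |t * y| := le_abs_self _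
      _ = |t| * |y| := abs_mul t y
  exact mul_le_mul_of_nonneg_right
    (mul_le_mul_of_nonneg_left hexp (pow_nonneg (abs_nonneg y) j)) (fp_pos hp y).le

end Main

/-! ### Complex extension and analyticity -/

noncomputable def Mc (p : ℝ) (z : ℂ) : ℂ := ∫ y : ℝ, Complex.exp (z * y) * (fp p y : ℂ)

section Analytic
include hp

lemma cont_c0 (z : ℂ) : Continuous fun y : ℝ => Complex.exp (z * y) * (fp p y : ℂ) :=
  ((continuous_const.mul Complex.continuous_ofReal).cexp).mul
    (Complex.continuous_ofReal.comp (fp_cont hp))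

lemma cont_c1 (z : ℂ) : Continuous fun y : ℝ => (y : ℂ) * Complex.exp (z * y) * (fp p y : ℂ) :=
  (Complex.continuous_ofReal.mul ((continuous_const.mul Complex.continuous_ofReal).cexp)).mul
    (Complex.continuous_ofReal.comp (fp_cont hp))

lemma norm_c0 (z : ℂ) (y : ℝ) :
    ‖Complex.exp (z * y) * (fp p y : ℂ)‖ = Real.exp (z.re * y) * fp p y := by
  rw [norm_mul, Complex.norm_exp, Complex.norm_real, Real.norm_eq_abs,
    abs_of_nonneg (fp_pos hp y).le]
  congr 2
  simp [Complex.mul_re]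

lemma norm_c1 (z : ℂ) (y : ℝ) :
    ‖(y : ℂ) * Complex.exp (z * y) * (fp p y : ℂ)‖ = |y| * Real.exp (z.re * y) * fp p y := by
  rw [norm_mul, norm_mul,
    Complex.norm_exp, Complex.norm_real, Complex.norm_real, Real.norm_eq_abs, Real.norm_eq_abs, abs_of_nonneg (fp_pos hp y).le]
  congr 3
  simp [Complex.mul_re]

lemma exp_re_le (j : ℕ) {c : ℝ} (hzc : |c| ≤ d) (y : ℝ) :
    |y| ^ j * Real.exp (c * y) * fp p y ≤ |y| ^ j * Real.exp (d * |y|) * fp p y := by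
  have hexp : Real.exp (c * y) ≤ Real.exp (d * |y|) := by
    refine Real.exp_le_exp.mpr ?_
    calc c * y ≤ |c * y| := le_abs_self _
      _ = |c| * |y| := abs_mul c y
      _ ≤ d * |y| := mul_le_mul_of_nonneg_right hzc (abs_nonneg y)
  exact mul_le_mul_of_nonneg_right
    (mul_le_mul_of_nonneg_left hexp (pow_nonneg (abs_nonneg y) j)) (fp_pos hp y).le

lemma integrable_c0 (z : ℂ) : Integrable fun y : ℝ => Complex.exp (z * y) * (fp p y : ℂ) := by
  refine Integrable.mono' (integrable_kernel hp 0 |z.re|)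
    (cont_c0 hp z).aestronglyMeasurable ?_
  filter_upwards with y
  rw [norm_c0 hp]
  have h := exp_re_le hp 0 (le_refl |z.re|) y
  simpa using h

lemma hasDerivAt_Mc (z : ℂ) :
    HasDerivAt (Mc p) (∫ y : ℝ, (y : ℂ) * Complex.exp (z * y) * (fp p y : ℂ)) z := by
  have key := hasDerivAt_integral_of_dominated_loc_of_deriv_le (μ := volume)
    (F := fun (x : ℂ) (y : ℝ) => Complex.exp (x * y) * (fp p y : ℂ))
    (F' := fun (x : ℂ) (y : ℝ) => (y : ℂ) * Complex.exp (x * y) * (fp p y : ℂ))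
    (x₀ := z) (s := Metric.ball z 1)
    (bound := fun y : ℝ => |y| ^ 1 * Real.exp ((|z.re| + 1) * |y|) * fp p y)
    (Metric.ball_mem_nhds z one_pos)
    (Filter.Eventually.of_forall fun x => (cont_c0 hp x).aestronglyMeasurable)
    (integrable_c0 hp z)
    ((cont_c1 hp z).aestronglyMeasurable)
    ?_ (integrable_kernel hp 1 (|z.re| + 1)) ?_
  · exact key.2
  · filter_upwards with y
    intro x hx
    have hxt : |x.re| ≤ |z.re| + 1 := by
      have h1 := Metric.mem_ball.mp hx
      rw [Complex.dist_eq] at h1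
      have h2 : |x.re - z.re| ≤ ‖x - z‖ := by
        have := Complex.abs_re_le_norm (x - z)
        simpa using this
      have h3 := abs_sub_abs_le_abs_sub x.re z.re
      linarith
    rw [norm_c1 hp]
    have h := exp_re_le hp 1 hxt y
    simpa using h
  · filter_upwards with y
    intro x _
    have h1 : HasDerivAt (fun x : ℂ => Complex.exp (x * y)) (Complex.exp (x * y) * y) x := by
      simpa using ((hasDerivAt_id x).mul_const (y : ℂ)).cexp
    have h2 := h1.mul_const ((fp p y : ℝ) : ℂ)
    exact h2.congr_deriv (by ring)

lemma analytic_Mc : AnalyticOnNhd ℂ (Mc p) Set.univ := by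
  have hd : Differentiable ℂ (Mc p) := fun z => (hasDerivAt_Mc hp z).differentiableAt
  exact hd.differentiableOn.analyticOnNhd isOpen_univ

lemma Mc_real (t : ℝ) : (Mc p t).re = Mn p 0 t := by
  have hint := integrable_c0 hp (t : ℂ)
  have h1 : (Mc p t).re = ∫ y : ℝ, (Complex.exp ((t:ℂ) * y) * (fp p y : ℂ)).re := by
    rw [Mc]
    exact (Complex.reCLM.integral_comp_comm hint).symm
  rw [h1, Mn]
  refine integral_congr_ae (Filter.Eventually.of_forall fun y => ?_)
  simp only [pow_zero, one_mul, ← Complex.ofReal_mul, ← Complex.ofReal_exp, Complex.ofReal_re]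

lemma analytic_Mn0 : AnalyticOnNhd ℝ (Mn p 0) Set.univ := by
  intro t _
  have h1 : AnalyticAt ℝ (fun s : ℝ => (Mc p s).re) t :=
    (Complex.reCLM.analyticAt _).comp
      (((analytic_Mc hp (t : ℂ) (Set.mem_univ _)).restrictScalars).comp
        (Complex.ofRealCLM.analyticAt t))
  exact h1.congr (Filter.Eventually.of_forall fun s => Mc_real hp s)

end Analytic

lemma analyticAt_log' {x : ℝ} (hx : 0 < x) : AnalyticAt ℝ Real.log x := by
  have hslit : (x : ℂ) ∈ Complex.slitPlane := Complex.ofReal_mem_slitPlane.mpr hx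
  have h1 : AnalyticAt ℝ (fun s : ℝ => (Complex.log s).re) x :=
    (Complex.reCLM.analyticAt _).comp
      (((analyticAt_clog hslit).restrictScalars).comp (Complex.ofRealCLM.analyticAt x))
  refine h1.congr ?_
  filter_upwards [eventually_gt_nhds hx] with s _
  rw [Complex.log_ofReal_re]

lemma contDiff_logMn (hp : 1 < p) : ContDiff ℝ (⊤ : ℕ∞) (fun t => Real.log (Mn p 0 t)) := by
  have h : AnalyticOnNhd ℝ (fun t => Real.log (Mn p 0 t)) Set.univ := by
    intro t _
    exact (analyticAt_log' (Mn_zero_pos hp t)).comp (analytic_Mn0 hp t (Set.mem_univ _))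
  exact (contDiff_omega_iff_analyticOnNhd.mpr h).of_le le_top

/-! ### Polynomial growth machinery -/

lemma pow_abs_le3 (t : ℝ) (m : ℕ) : (|t| + 2) ^ m ≤ 3 ^ m * (|t| ^ m + 1) := by
  have h3 : (0:ℝ) ≤ 3 ^ m := by positivity
  have htm : (0:ℝ) ≤ |t| ^ m := pow_nonneg (abs_nonneg t) m
  rcases le_total |t| 1 with h | h
  · have h1 : (|t| + 2) ^ m ≤ 3 ^ m := pow_le_pow_left₀ (by positivity) (by linarith) m
    nlinarith
  · have h1 : (|t| + 2) ^ m ≤ (3 * |t|) ^ m := pow_le_pow_left₀ (by positivity) (by linarith) m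
    rw [mul_pow] at h1
    nlinarith

lemma pow_le_pow_add_one (t : ℝ) {m1 m : ℕ} (h : m1 ≤ m) : |t| ^ m1 ≤ |t| ^ m + 1 := by
  have htm : (0:ℝ) ≤ |t| ^ m := pow_nonneg (abs_nonneg t) m
  rcases le_total |t| 1 with h1 | h1
  · have := pow_le_one₀ (abs_nonneg t) h1 (n := m1)
    linarith
  · have := pow_le_pow_right₀ h1 h
    linarith

/-- functions generated by the normalized moment functions -/
inductive Good (p : ℝ) : (ℝ → ℝ) → Prop
  | base (j : ℕ) : Good p (fun t => Mn p j t / Mn p 0 t)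
  | add {f g : ℝ → ℝ} : Good p f → Good p g → Good p (fun t => f t + g t)
  | neg {f : ℝ → ℝ} : Good p f → Good p (fun t => -f t)
  | mul {f g : ℝ → ℝ} : Good p f → Good p g → Good p (fun t => f t * g t)

section Growth
include hp

lemma tail_pt (j : ℕ) {t y : ℝ} (hy : Ap p |t| ≤ |y|) :
    |y| ^ j * Real.exp (t * y) * fp p y ≤
      (j.factorial : ℝ) * Real.exp (-|y|) / (2 * p ^ (1/p) * Real.Gamma (1 + 1/p)) := by
  have hZ := Zpos hp
  have h1 : |y| ^ j ≤ (j.factorial : ℝ) * Real.exp |y| := pow_le_fact_exp j _ (abs_nonneg y)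
  have h2 : Real.exp (t * y) ≤ Real.exp (|t| * |y|) := by
    refine Real.exp_le_exp.mpr ?_
    calc t * y ≤ |t * y| := le_abs_self _
      _ = |t| * |y| := abs_mul t y
  have h3 := tail_bound hp (abs_nonneg t) hy
  have hfp : fp p y = Real.exp (-|y| ^ p / p) / (2 * p ^ (1/p) * Real.Gamma (1 + 1/p)) := rfl
  rw [hfp, neg_div]
  set Z := 2 * p ^ (1/p) * Real.Gamma (1 + 1/p)
  have hE : (0:ℝ) < Real.exp (-(|y| ^ p / p)) := Real.exp_pos _
  calc |y| ^ j * Real.exp (t * y) * (Real.exp (-(|y| ^ p / p)) / Z)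
      = (|y| ^ j * Real.exp (t * y) * Real.exp (-(|y| ^ p / p))) * Z⁻¹ := by ring
    _ ≤ (((j.factorial : ℝ) * Real.exp |y|) * Real.exp (|t| * |y|) *
          Real.exp (-(|y| ^ p / p))) * Z⁻¹ := by
        refine mul_le_mul_of_nonneg_right ?_ (inv_nonneg.mpr hZ.le)
        refine mul_le_mul_of_nonneg_right ?_ hE.le
        exact mul_le_mul h1 h2 (Real.exp_pos _).le (by positivity)
    _ = ((j.factorial : ℝ) * Real.exp (|y| + |t| * |y| + -(|y| ^ p / p))) * Z⁻¹ := by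
        rw [Real.exp_add, Real.exp_add]; ring
    _ ≤ ((j.factorial : ℝ) * Real.exp (-|y|)) * Z⁻¹ := by
        refine mul_le_mul_of_nonneg_right (mul_le_mul_of_nonneg_left
          (Real.exp_le_exp.mpr ?_) (Nat.cast_nonneg _)) (inv_nonneg.mpr hZ.le)
        nlinarith [abs_nonneg y, abs_nonneg t]
    _ = (j.factorial : ℝ) * Real.exp (-|y|) / Z := by ring

lemma growth_base (j : ℕ) : ∃ (C : ℝ) (m : ℕ), 0 < C ∧
    ∀ t : ℝ, |Mn p j t / Mn p 0 t| ≤ C * (|t| ^ m + 1) := by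
  have hZ := Zpos hp
  set Z := 2 * p ^ (1/p) * Real.Gamma (1 + 1/p) with hZdef
  set n := ⌈1/(p-1)⌉₊ with hn
  set c := min (∫ y in Set.Ici (0:ℝ), fp p y) (∫ y in Set.Iic (0:ℝ), fp p y) with hc
  have hc0 : 0 < c := lt_min
    (setIntegral_fp_pos hp measurableSet_Ici (by rw [Real.volume_Ici]; exact ENNReal.zero_lt_top))
    (setIntegral_fp_pos hp measurableSet_Iic (by rw [Real.volume_Iic]; exact ENNReal.zero_lt_top))
  have hDint : Integrable (fun y : ℝ => (j.factorial : ℝ) * Real.exp (-|y|) / Z) := by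
    simpa [mul_div_assoc] using (integrable_exp_neg_abs.div_const Z).const_mul (j.factorial : ℝ)
  set D := ∫ y : ℝ, (j.factorial : ℝ) * Real.exp (-|y|) / Z with hD
  have hD0 : 0 ≤ D := integral_nonneg fun y => by positivity
  refine ⟨p ^ (n*j) * 3 ^ (n*j) + D / c + 1, n * j, by positivity, fun t => ?_⟩
  have hAt1 : (1:ℝ) ≤ Ap p |t| := Ap_ge_one hp (abs_nonneg t)
  set s : Set ℝ := {y | |y| ≤ Ap p |t|} with hsdef
  have hs : MeasurableSet s := measurableSet_le measurable_abs measurable_const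
  have hNint := integrable_abs_Mn hp j t
  have hnum : |Mn p j t| ≤ ∫ y : ℝ, |y| ^ j * Real.exp (t * y) * fp p y := by
    rw [Mn, ← Real.norm_eq_abs]
    refine le_trans (norm_integral_le_integral_norm _) (le_of_eq ?_)
    refine integral_congr_ae (Filter.Eventually.of_forall fun y => ?_)
    show ‖y ^ j * Real.exp (t * y) * fp p y‖ = |y| ^ j * Real.exp (t * y) * fp p y
    rw [Real.norm_eq_abs, abs_mul, abs_mul, abs_pow, abs_of_nonneg (fp_pos hp y).le,
      Real.abs_exp]
  have hsplit : (∫ y : ℝ, |y| ^ j * Real.exp (t * y) * fp p y) =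
      (∫ y in s, |y| ^ j * Real.exp (t * y) * fp p y) +
      (∫ y in sᶜ, |y| ^ j * Real.exp (t * y) * fp p y) :=
    (integral_add_compl hs hNint).symm
  have h_s : (∫ y in s, |y| ^ j * Real.exp (t * y) * fp p y) ≤ Ap p |t| ^ j * Mn p 0 t := by
    have h1 : (∫ y in s, |y| ^ j * Real.exp (t * y) * fp p y) ≤
        ∫ y in s, Ap p |t| ^ j * (y ^ 0 * Real.exp (t * y) * fp p y) := by
      refine setIntegral_mono_on hNint.integrableOn
        (((integrable_Mn hp 0 t).const_mul _).integrableOn) hs ?_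
      intro y hy
      have hyA : |y| ≤ Ap p |t| := hy
      have h2 : |y| ^ j ≤ Ap p |t| ^ j := pow_le_pow_left₀ (abs_nonneg y) hyA j
      have h3 : (0:ℝ) < Real.exp (t * y) * fp p y :=
        mul_pos (Real.exp_pos _) (fp_pos hp y)
      simp only [pow_zero, one_mul]
      nlinarith
    refine le_trans h1 ?_
    rw [MeasureTheory.integral_const_mul]
    refine mul_le_mul_of_nonneg_left ?_ (by positivity)
    refine setIntegral_le_integral (integrable_Mn hp 0 t)
      (Filter.Eventually.of_forall fun y => ?_)
    have := fp_pos hp y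
    have := Real.exp_pos (t * y)
    simp only [pow_zero, one_mul]
    positivity
  have h_sc : (∫ y in sᶜ, |y| ^ j * Real.exp (t * y) * fp p y) ≤ D := by
    have h1 : (∫ y in sᶜ, |y| ^ j * Real.exp (t * y) * fp p y) ≤
        ∫ y in sᶜ, (j.factorial : ℝ) * Real.exp (-|y|) / Z := by
      refine setIntegral_mono_on hNint.integrableOn hDint.integrableOn hs.compl ?_
      intro y hy
      have hyA : Ap p |t| ≤ |y| := le_of_lt (not_le.mp hy)
      exact tail_pt hp j hyA
    exact le_trans h1 (setIntegral_le_integral hDint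
      (Filter.Eventually.of_forall fun y => by positivity))
  have hM0 := Mn_zero_pos hp t
  have hM0c : c ≤ Mn p 0 t := Mn_zero_lb hp t
  have hfrac : |Mn p j t / Mn p 0 t| ≤ Ap p |t| ^ j + D / c := by
    rw [abs_div, abs_of_pos hM0, div_le_iff₀ hM0]
    have hDc : D ≤ D / c * Mn p 0 t := by
      have h7 : D / c * c ≤ D / c * Mn p 0 t := mul_le_mul_of_nonneg_left hM0c (by positivity)
      have h8 : D / c * c = D := by field_simp
      linarith
    calc |Mn p j t| ≤ Ap p |t| ^ j * Mn p 0 t + D := by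
          rw [hsplit] at hnum; linarith
      _ ≤ (Ap p |t| ^ j + D / c) * Mn p 0 t := by nlinarith
  refine le_trans hfrac ?_
  have hAp : Ap p |t| ^ j ≤ p ^ (n*j) * 3 ^ (n*j) * (|t| ^ (n*j) + 1) := by
    have h1 : Ap p |t| ^ j = (p * (|t| + 2)) ^ (n * j) := by
      rw [Ap, ← pow_mul]
    rw [h1, mul_pow]
    have h2 : (|t| + 2) ^ (n*j) ≤ 3 ^ (n*j) * (|t| ^ (n*j) + 1) := pow_abs_le3 t (n*j)
    have hp1 : (0:ℝ) ≤ p ^ (n*j) := by positivity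
    calc p ^ (n*j) * (|t| + 2) ^ (n*j) ≤ p ^ (n*j) * (3 ^ (n*j) * (|t| ^ (n*j) + 1)) :=
          mul_le_mul_of_nonneg_left h2 hp1
      _ = p ^ (n*j) * 3 ^ (n*j) * (|t| ^ (n*j) + 1) := by ring
  have htm : (0:ℝ) ≤ |t| ^ (n*j) := pow_nonneg (abs_nonneg t) _
  have hDc0 : 0 ≤ D / c := by positivity
  nlinarith

lemma good_growth {f : ℝ → ℝ} (hf : Good p f) :
    ∃ (C : ℝ) (m : ℕ), 0 < C ∧ ∀ t : ℝ, |f t| ≤ C * (|t| ^ m + 1) := by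
  induction hf with
  | base j => exact growth_base hp j
  | @add f g hf hg ihf ihg =>
      obtain ⟨C1, m1, hC1, h1⟩ := ihf
      obtain ⟨C2, m2, hC2, h2⟩ := ihg
      refine ⟨2 * (C1 + C2), max m1 m2, by positivity, fun t => ?_⟩
      have e1 := pow_le_pow_add_one t (le_max_left m1 m2)
      have e2 := pow_le_pow_add_one t (le_max_right m1 m2)
      have h1t := h1 t; have h2t := h2 t
      have hm : (0:ℝ) ≤ |t| ^ max m1 m2 := pow_nonneg (abs_nonneg t) _
      calc |f t + g t| ≤ |f t| + |g t| := abs_add_le _ _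
        _ ≤ 2 * (C1 + C2) * (|t| ^ max m1 m2 + 1) := by nlinarith [abs_nonneg (f t)]
  | neg hf ihf =>
      obtain ⟨C1, m1, hC1, h1⟩ := ihf
      exact ⟨C1, m1, hC1, fun t => by rw [abs_neg]; exact h1 t⟩
  | @mul f g hf hg ihf ihg =>
      obtain ⟨C1, m1, hC1, h1⟩ := ihf
      obtain ⟨C2, m2, hC2, h2⟩ := ihg
      refine ⟨4 * (C1 * C2), m1 + m2, by positivity, fun t => ?_⟩
      have h1t := h1 t; have h2t := h2 t
      have e1 := pow_le_pow_add_one t (Nat.le_add_right m1 m2)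
      have e2 := pow_le_pow_add_one t (Nat.le_add_left m2 m1)
      have hpw : |t| ^ m1 * |t| ^ m2 = |t| ^ (m1 + m2) := (pow_add |t| m1 m2).symm
      have h0 : (0:ℝ) ≤ |t| ^ (m1+m2) := pow_nonneg (abs_nonneg t) _
      have hCC : (0:ℝ) < C1 * C2 := mul_pos hC1 hC2
      calc |f t * g t| = |f t| * |g t| := abs_mul _ _
        _ ≤ 4 * (C1 * C2) * (|t| ^ (m1 + m2) + 1) := by
            nlinarith [abs_nonneg (f t), abs_nonneg (g t),
              mul_le_mul h1t h2t (abs_nonneg _) (by positivity),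
              mul_le_mul_of_nonneg_left e1 hCC.le,
              mul_le_mul_of_nonneg_left e2 hCC.le]

lemma good_deriv {f : ℝ → ℝ} (hf : Good p f) :
    ∃ f' : ℝ → ℝ, Good p f' ∧ ∀ t : ℝ, HasDerivAt f (f' t) t := by
  induction hf with
  | base j =>
      refine ⟨fun t => Mn p (j+1) t / Mn p 0 t +
        -(Mn p j t / Mn p 0 t * (Mn p 1 t / Mn p 0 t)),
        Good.add (Good.base (j+1)) (Good.neg (Good.mul (Good.base j) (Good.base 1))), fun t => ?_⟩
      have h := (hasDerivAt_Mn hp j t).div (hasDerivAt_Mn hp 0 t) (Mn_zero_pos hp t).ne'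
      refine h.congr_deriv ?_
      have h0 := (Mn_zero_pos hp t).ne'
      field_simp
      ring
  | add hf hg ihf ihg =>
      obtain ⟨f', hf', hdf⟩ := ihf
      obtain ⟨g', hg', hdg⟩ := ihg
      exact ⟨fun t => f' t + g' t, Good.add hf' hg', fun t => (hdf t).add (hdg t)⟩
  | neg hf ihf =>
      obtain ⟨f', hf', hdf⟩ := ihf
      exact ⟨fun t => -f' t, Good.neg hf', fun t => (hdf t).neg⟩
  | @mul f g hf hg ihf ihg =>
      obtain ⟨f', hf', hdf⟩ := ihf
      obtain ⟨g', hg', hdg⟩ := ihg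
      exact ⟨fun t => f' t * g t + f t * g' t,
        Good.add (Good.mul hf' hg) (Good.mul hf hg'),
        fun t => (hdf t).mul (hdg t)⟩

lemma iterated_good (k : ℕ) : ∃ f : ℝ → ℝ, Good p f ∧
    iteratedDeriv (k+1) (fun t => Real.log (Mn p 0 t)) = f := by
  induction k with
  | zero =>
      refine ⟨fun t => Mn p 1 t / Mn p 0 t, Good.base 1, ?_⟩
      rw [iteratedDeriv_one]
      funext t
      exact ((hasDerivAt_Mn hp 0 t).log (Mn_zero_pos hp t).ne').deriv
  | succ k ih =>
      obtain ⟨f, hf, heq⟩ := ih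
      obtain ⟨f', hf', hdf⟩ := good_deriv hp hf
      refine ⟨f', hf', ?_⟩
      rw [iteratedDeriv_succ, heq]
      funext t
      exact (hdf t).deriv

lemma log_bound : ∃ (C : ℝ) (m : ℕ), 0 < C ∧
    ∀ t : ℝ, |Real.log (Mn p 0 t)| ≤ C * (|t| ^ m + 1) := by
  have hZ := Zpos hp
  set Z := 2 * p ^ (1/p) * Real.Gamma (1 + 1/p) with hZdef
  set n := ⌈1/(p-1)⌉₊ with hn
  set c := min (∫ y in Set.Ici (0:ℝ), fp p y) (∫ y in Set.Iic (0:ℝ), fp p y) with hc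
  have hc0 : 0 < c := lt_min
    (setIntegral_fp_pos hp measurableSet_Ici (by rw [Real.volume_Ici]; exact ENNReal.zero_lt_top))
    (setIntegral_fp_pos hp measurableSet_Iic (by rw [Real.volume_Iic]; exact ENNReal.zero_lt_top))
  set I := ∫ y : ℝ, Real.exp (-|y|) with hI
  have hI0 : 0 ≤ I := integral_nonneg fun y => (Real.exp_pos _).le
  refine ⟨p ^ n * 3 ^ (n+1) + I / Z + |Real.log c| + 1, n + 1, by positivity, fun t => ?_⟩
  have hM0 := Mn_zero_pos hp t
  have hub : Real.log (Mn p 0 t) ≤ (|t| + 2) * Ap p |t| + I / Z := by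
    have h1 : Mn p 0 t ≤ Real.exp ((|t| + 2) * Ap p |t|) / Z * I := by
      rw [Mn, ← MeasureTheory.integral_const_mul]
      refine integral_mono (integrable_Mn hp 0 t)
        ((integrable_exp_neg_abs.const_mul _)) (fun y => ?_)
      have h2 := kernel_le hp 0 (abs_nonneg t) y
      simp only [pow_zero, one_mul, Nat.factorial_zero, Nat.cast_one] at h2 ⊢
      have h3 : Real.exp (t * y) * fp p y ≤ Real.exp (|t| * |y|) * fp p y := by
        have := exp_re_le hp 0 (le_refl |t|) y
        simpa using this
      calc Real.exp (t * y) * fp p y ≤ Real.exp (|t| * |y|) * fp p y := h3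
        _ ≤ Real.exp ((|t| + 2) * Ap p |t|) / Z * Real.exp (-|y|) := by
            have h6 := kernel_le hp 0 (abs_nonneg t) y
            simp only [pow_zero, one_mul, Nat.factorial_zero, Nat.cast_one] at h6
            rw [hZdef]
            exact h6
    have h4 : Mn p 0 t ≤ Real.exp ((|t| + 2) * Ap p |t| + I / Z) := by
      rw [Real.exp_add]
      have h5 : I / Z ≤ Real.exp (I / Z) := by
        have := Real.add_one_le_exp (I / Z); linarith
      calc Mn p 0 t ≤ Real.exp ((|t| + 2) * Ap p |t|) / Z * I := h1
        _ = Real.exp ((|t| + 2) * Ap p |t|) * (I / Z) := by ring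
        _ ≤ Real.exp ((|t| + 2) * Ap p |t|) * Real.exp (I / Z) :=
            mul_le_mul_of_nonneg_left h5 (Real.exp_pos _).le
    exact (Real.log_le_iff_le_exp hM0).mpr h4
  have hlb : Real.log c ≤ Real.log (Mn p 0 t) := Real.log_le_log hc0 (Mn_zero_lb hp t)
  have hApb : (|t| + 2) * Ap p |t| ≤ p ^ n * 3 ^ (n+1) * (|t| ^ (n+1) + 1) := by
    have h1 : (|t| + 2) * Ap p |t| = (|t| + 2) * (p ^ n * (|t| + 2) ^ n) := by
      rw [Ap, mul_pow]
    have h2 : (|t| + 2) * (p ^ n * (|t| + 2) ^ n) = p ^ n * (|t| + 2) ^ (n+1) := by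
      rw [pow_succ]; ring
    rw [h1, h2]
    have h3 := pow_abs_le3 t (n+1)
    have hp1 : (0:ℝ) ≤ p ^ n := by positivity
    calc p ^ n * (|t| + 2) ^ (n+1) ≤ p ^ n * (3 ^ (n+1) * (|t| ^ (n+1) + 1)) :=
          mul_le_mul_of_nonneg_left h3 hp1
      _ = p ^ n * 3 ^ (n+1) * (|t| ^ (n+1) + 1) := by ring
  have htm : (0:ℝ) ≤ |t| ^ (n+1) := pow_nonneg (abs_nonneg t) _
  have hIZ : 0 ≤ I / Z := by positivity
  have habs := abs_nonneg (Real.log c)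
  have h6 : -|Real.log c| ≤ Real.log c := neg_abs_le _
  have hpn : (0:ℝ) ≤ p ^ n * 3 ^ (n+1) := by positivity
  have key : |Real.log c| * 1 ≤
      (p ^ n * 3 ^ (n+1) + I / Z + |Real.log c| + 1) * (|t| ^ (n+1) + 1) :=
    mul_le_mul (by linarith) (by linarith) one_pos.le (by positivity)
  rw [abs_le]
  constructor
  · have h9 : -((p ^ n * 3 ^ (n+1) + I / Z + |Real.log c| + 1) * (|t| ^ (n+1) + 1)) ≤
        -|Real.log c| := by linarith
    linarith
  · nlinarith [mul_nonneg hIZ htm, mul_nonneg habs htm, htm, hApb, hub]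

end Growth

end Stmt6Aux

open Stmt6Aux in
theorem stmt6 (p : ℝ) (hp : 1 < p)
    (g : ℝ → ℝ) (hg : g = fun t => Real.log (∫ y : ℝ, Real.exp (t * y) * fp p y)) :
    ContDiff ℝ (⊤ : ℕ∞) g ∧
    ∀ k : ℕ, ∃ (C : ℝ) (m : ℕ) (T : ℝ), 0 < C ∧ ∀ t : ℝ, T < |t| →
      |iteratedDeriv k g t| ≤ C * (|t| ^ m + 1) := by
  have hgM : g = fun t => Real.log (Mn p 0 t) := by
    rw [hg]; funext t; congr 1; rw [Mn]
    refine integral_congr_ae (Filter.Eventually.of_forall fun y => ?_)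
    simp
  rw [hgM]
  constructor
  · exact contDiff_logMn hp
  · intro k
    cases k with
    | zero =>
        obtain ⟨C, m, hC, h⟩ := log_bound hp
        exact ⟨C, m, 0, hC, fun t _ => by simpa [iteratedDeriv_zero] using h t⟩
    | succ k =>
        obtain ⟨f, hfg, heq⟩ := iterated_good hp k
        obtain ⟨C, m, hC, h⟩ := good_growth hp hfg
        exact ⟨C, m, 0, hC, fun t _ => by rw [heq]; exact h t⟩
end
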